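/- With the same setup, the support function p = ⟨x, ν⟩ of an immersed closed oriented hypersurface satisfies Δ_F p + tr(A_F S²) p + H_F + ⟨x, ∇H_F⟩ = 0. In particular, if H_F is constant then Δ_F p + tr(A_F S²) p + H_F = 0. -/

import Mathlib

open Finset MeasureTheory

noncomputable section

/-- Kronecker delta. -/
def kron {n : ℕ} (i j : Fin n) : ℝ := if i = j then 1 else 0

/-- Covariant derivative of a 1-tensor `T` in an orthonormal frame `{e_i}` with
directional derivatives `D i = e_i` and connection coefficients
`Γ k i j = ω_{ki}(e_j)`: `T_{i;j} = e_j(T_i) + Σ_k T_k ω_{ki}(e_j)`. -/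
def cov1 {n : ℕ} {S : Type} (D : Fin n → (S → ℝ) → S → ℝ)
    (Γ : Fin n → Fin n → Fin n → S → ℝ) (T : Fin n → S → ℝ)
    (i j : Fin n) (s : S) : ℝ :=
  D j (T i) s + ∑ k, T k s * Γ k i j s

/-- Covariant derivative of a 2-tensor. -/
def cov2 {n : ℕ} {S : Type} (D : Fin n → (S → ℝ) → S → ℝ)
    (Γ : Fin n → Fin n → Fin n → S → ℝ) (T : Fin n → Fin n → S → ℝ)
    (i j k : Fin n) (s : S) : ℝ :=
  D k (T i j) s + (∑ l, T l j s * Γ l i k s) + ∑ l, T i l s * Γ l j k s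

/-- The anisotropic Laplacian `Δ_F f = div(A_F ∇ f)` in frame components. -/
def lapF {n : ℕ} {S : Type} (D : Fin n → (S → ℝ) → S → ℝ)
    (Γ : Fin n → Fin n → Fin n → S → ℝ) (Aν : Fin n → Fin n → S → ℝ)
    (f : S → ℝ) (s : S) : ℝ :=
  ∑ i, cov1 D Γ (fun k t => ∑ l, Aν k l t * D l f t) i i s

/-- Components `s_{ij} = Σ_l (A_{il}∘ν) h_{lj}` of the anisotropic Weingarten
operator `S_F = A_F ∘ S`. -/
def sF {n : ℕ} {S : Type} (Aν h : Fin n → Fin n → S → ℝ)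
    (i j : Fin n) (s : S) : ℝ :=
  ∑ l, Aν i l s * h l j s

/-- The anisotropic mean curvature `H_F = tr S_F`. -/
def HF {n : ℕ} {S : Type} (Aν h : Fin n → Fin n → S → ℝ) (s : S) : ℝ :=
  ∑ i, sF Aν h i i s

/-- `tr(S_F²) = Σ_{i,j} s_{ij} s_{ji}`. -/
def trSF2 {n : ℕ} {S : Type} (Aν h : Fin n → Fin n → S → ℝ) (s : S) : ℝ :=
  ∑ i, ∑ j, sF Aν h i j s * sF Aν h j i s

/-- `tr(A_F S²) = Σ_{i,j,k} (A_{ik}∘ν) h_{kj} h_{ji}`. -/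
def trAFS2 {n : ℕ} {S : Type} (Aν h : Fin n → Fin n → S → ℝ) (s : S) : ℝ :=
  ∑ i, ∑ j, sF Aν h i j s * h j i s

/-! With `q_k = ⟨x, e_k⟩` one has `∇p = -S q` and, covariantly, `∇q = Id + p S`, so that
`A_F ∇p = -S_F q`. Taking the divergence with the Leibniz rule gives
`Δ_F p = -⟨div S_F, q⟩ - tr S_F - tr(S_F S) p`, and `div S_F = ∇H_F` by the Codazzi equation
together with the symmetry of the third derivatives `A_{ij,k}` of `F`. -/

open scoped RealInnerProductSpace

structure IsDerivationOp {S : Type*} (δ : (S → ℝ) → S → ℝ) : Prop where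
  map_add : ∀ (f g : S → ℝ) s, δ (fun t => f t + g t) s = δ f s + δ g s
  map_mul : ∀ (f g : S → ℝ) s, δ (fun t => f t * g t) s = δ f s * g s + f s * δ g s

namespace IsDerivationOp

variable {S : Type*} {δ : (S → ℝ) → S → ℝ}

theorem map_zero (hδ : IsDerivationOp δ) (s : S) : δ (fun _ => 0) s = 0 := by
  have := hδ.map_add (fun _ => 0) (fun _ => 0) s
  simp only [add_zero] at this
  linarith

theorem map_neg (hδ : IsDerivationOp δ) (f : S → ℝ) (s : S) :
    δ (fun t => -f t) s = -δ f s := by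
  have := hδ.map_add f (fun t => -f t) s
  simp only [add_neg_cancel, hδ.map_zero] at this
  linarith

theorem map_sum (hδ : IsDerivationOp δ) {α : Type*} (A : Finset α) (f : α → S → ℝ) (s : S) :
    δ (fun t => ∑ a ∈ A, f a t) s = ∑ a ∈ A, δ (f a) s := by
  induction A using Finset.cons_induction with
  | empty => simpa using hδ.map_zero s
  | cons b B hb ih => simp only [Finset.sum_cons, hδ.map_add, ih]

theorem map_inner (hδ : IsDerivationOp δ) {E : Type*} [NormedAddCommGroup E]
    [InnerProductSpace ℝ E] [FiniteDimensional ℝ E] {u v : S → E} {u' v' : E} {s : S}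
    (hu : ∀ w, δ (fun t => ⟪u t, w⟫) s = ⟪u', w⟫)
    (hv : ∀ w, δ (fun t => ⟪v t, w⟫) s = ⟪v', w⟫) :
    δ (fun t => ⟪u t, v t⟫) s = ⟪u', v s⟫ + ⟪u s, v'⟫ := by
  let b := stdOrthonormalBasis ℝ E
  have expand : (fun t => ⟪u t, v t⟫) = fun t => ∑ a, ⟪u t, b a⟫ * ⟪v t, b a⟫ := by
    funext t
    simp only [← (b.sum_inner_mul_inner (u t) (v t)), real_inner_comm (v t)]
  simp only [expand, hδ.map_sum, hδ.map_mul, hu, hv, Finset.sum_add_distrib]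
  rw [← b.sum_inner_mul_inner u' (v s), ← b.sum_inner_mul_inner (u s) v']
  simp only [real_inner_comm (b _)]

end IsDerivationOp

section CovariantDerivative

variable {n : ℕ} {S : Type} {D : Fin n → (S → ℝ) → S → ℝ}
  {Γ : Fin n → Fin n → Fin n → S → ℝ}

theorem cov1_neg (hD : ∀ i, IsDerivationOp (D i)) (T : Fin n → S → ℝ) (i j : Fin n) (s : S) :
    cov1 D Γ (fun i t => -T i t) i j s = -cov1 D Γ T i j s := by
  simp only [cov1, (hD j).map_neg, neg_mul, Finset.sum_neg_distrib, neg_add]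

theorem cov1_sum_mul (hD : ∀ i, IsDerivationOp (D i))
    (hΓ : ∀ i j k s, Γ i j k s = -Γ j i k s)
    (T : Fin n → Fin n → S → ℝ) (U : Fin n → S → ℝ) (i j : Fin n) (s : S) :
    cov1 D Γ (fun i t => ∑ r, T i r t * U r t) i j s =
      ∑ r, (cov2 D Γ T i r j s * U r s + T i r s * cov1 D Γ U r j s) := by
  have transport : ∑ k, (∑ r, T k r s * U r s) * Γ k i j s =
      ∑ r, (∑ l, T l r s * Γ l i j s) * U r s := by
    simp only [Finset.sum_mul]
    rw [Finset.sum_comm]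
    exact Finset.sum_congr rfl fun _ _ => Finset.sum_congr rfl fun _ _ => by ring
  have cancel : ∑ r, (∑ l, T i l s * Γ l r j s) * U r s +
      ∑ r, T i r s * ∑ k, U k s * Γ k r j s = 0 := by
    simp only [Finset.sum_mul, Finset.mul_sum]
    rw [Finset.sum_comm, ← Finset.sum_add_distrib]
    refine Finset.sum_eq_zero fun _ _ => ?_
    rw [← Finset.sum_add_distrib]
    refine Finset.sum_eq_zero fun _ _ => ?_
    rw [hΓ]; ring
  simp only [cov1, cov2, (hD j).map_sum, (hD j).map_mul, transport, add_mul, mul_add,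
    Finset.sum_add_distrib]
  linarith

theorem cov2_sum_mul (hD : ∀ i, IsDerivationOp (D i))
    (hΓ : ∀ i j k s, Γ i j k s = -Γ j i k s)
    (A B : Fin n → Fin n → S → ℝ) (i j k : Fin n) (s : S) :
    cov2 D Γ (fun i j t => ∑ l, A i l t * B l j t) i j k s =
      ∑ l, (cov2 D Γ A i l k s * B l j s + A i l s * cov2 D Γ B l j k s) := by
  have transport_left : ∑ m, (∑ l, A m l s * B l j s) * Γ m i k s =
      ∑ l, (∑ m, A m l s * Γ m i k s) * B l j s := by
    simp only [Finset.sum_mul]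
    rw [Finset.sum_comm]
    exact Finset.sum_congr rfl fun _ _ => Finset.sum_congr rfl fun _ _ => by ring
  have transport_right : ∑ m, (∑ l, A i l s * B l m s) * Γ m j k s =
      ∑ l, A i l s * ∑ m, B l m s * Γ m j k s := by
    simp only [Finset.sum_mul, Finset.mul_sum]
    rw [Finset.sum_comm]
    exact Finset.sum_congr rfl fun _ _ => Finset.sum_congr rfl fun _ _ => by ring
  have cancel : ∑ l, (∑ m, A i m s * Γ m l k s) * B l j s +
      ∑ l, A i l s * ∑ m, B m j s * Γ m l k s = 0 := by
    simp only [Finset.sum_mul, Finset.mul_sum]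
    rw [Finset.sum_comm, ← Finset.sum_add_distrib]
    refine Finset.sum_eq_zero fun _ _ => ?_
    rw [← Finset.sum_add_distrib]
    refine Finset.sum_eq_zero fun _ _ => ?_
    rw [hΓ]; ring
  simp only [cov2, (hD k).map_sum, (hD k).map_mul, transport_left, transport_right, add_mul,
    mul_add, Finset.sum_add_distrib]
  linarith

theorem deriv_trace_eq_sum_cov2 (hD : ∀ i, IsDerivationOp (D i))
    (hΓ : ∀ i j k s, Γ i j k s = -Γ j i k s)
    (T : Fin n → Fin n → S → ℝ) (k : Fin n) (s : S) :
    D k (fun t => ∑ i, T i i t) s = ∑ i, cov2 D Γ T i i k s := by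
  have cancel : ∑ i, ∑ l, T l i s * Γ l i k s + ∑ i, ∑ l, T i l s * Γ l i k s = 0 := by
    rw [Finset.sum_comm (f := fun i l => T i l s * Γ l i k s), ← Finset.sum_add_distrib]
    refine Finset.sum_eq_zero fun _ _ => ?_
    rw [← Finset.sum_add_distrib]
    refine Finset.sum_eq_zero fun _ _ => ?_
    rw [hΓ]; ring
  simp only [cov2, (hD k).map_sum, Finset.sum_add_distrib]
  linarith

end CovariantDerivative

section AnisotropicCurvature

variable {n : ℕ} {S : Type} {D : Fin n → (S → ℝ) → S → ℝ}
  {Γ : Fin n → Fin n → Fin n → S → ℝ} {Aν h : Fin n → Fin n → S → ℝ}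

theorem sum_cov2_sF_eq_deriv_HF (hD : ∀ i, IsDerivationOp (D i))
    (hΓ : ∀ i j k s, Γ i j k s = -Γ j i k s)
    (hCodazzi : ∀ i j k s, cov2 D Γ h i j k s = cov2 D Γ h i k j s)
    {AAA : Fin n → Fin n → Fin n → S → ℝ} (hAAA : ∀ i j k s, AAA i j k s = AAA i k j s)
    (hAν : ∀ i j k s, cov2 D Γ Aν i j k s = -∑ p, AAA i j p s * h p k s) (r : Fin n) (s : S) :
    ∑ i, cov2 D Γ (sF Aν h) i r i s = D r (HF Aν h) s := by
  have hsF : ∀ i j k, cov2 D Γ (sF Aν h) i j k s =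
      ∑ l, (cov2 D Γ Aν i l k s * h l j s + Aν i l s * cov2 D Γ h l j k s) :=
    fun i j k => cov2_sum_mul hD hΓ Aν h i j k s
  have hA_term : ∑ i, ∑ l, cov2 D Γ Aν i l i s * h l r s =
      ∑ i, ∑ l, cov2 D Γ Aν i l r s * h l i s := by
    simp only [hAν, neg_mul, Finset.sum_neg_distrib, Finset.sum_mul]
    congr 1
    refine Finset.sum_congr rfl fun i _ => ?_
    rw [Finset.sum_comm]
    exact Finset.sum_congr rfl fun _ _ => Finset.sum_congr rfl fun _ _ => by rw [hAAA]; ring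
  have hh_term : ∑ i, ∑ l, Aν i l s * cov2 D Γ h l r i s =
      ∑ i, ∑ l, Aν i l s * cov2 D Γ h l i r s := by
    simp only [hCodazzi _ r]
  change _ = D r (fun t => ∑ i, sF Aν h i i t) s
  rw [deriv_trace_eq_sum_cov2 hD hΓ]
  simp only [hsF, Finset.sum_add_distrib, hA_term, hh_term]

theorem lapF_add_trAFS2_mul_add_HF_add_sum_eq_zero (hD : ∀ i, IsDerivationOp (D i))
    (hΓ : ∀ i j k s, Γ i j k s = -Γ j i k s)
    (hCodazzi : ∀ i j k s, cov2 D Γ h i j k s = cov2 D Γ h i k j s)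
    {AAA : Fin n → Fin n → Fin n → S → ℝ} (hAAA : ∀ i j k s, AAA i j k s = AAA i k j s)
    (hAν : ∀ i j k s, cov2 D Γ Aν i j k s = -∑ p, AAA i j p s * h p k s)
    {p : S → ℝ} {q : Fin n → S → ℝ} (hp : ∀ j s, D j p s = -∑ k, h j k s * q k s)
    (hq : ∀ m i s, cov1 D Γ q m i s = kron i m + h m i s * p s) (s : S) :
    lapF D Γ Aν p s + trAFS2 Aν h s * p s + HF Aν h s + ∑ j, D j (HF Aν h) s * q j s = 0 := by
  have hgrad : (fun k t => ∑ l, Aν k l t * D l p t) = fun k t => -∑ r, sF Aν h k r t * q r t := by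
    funext k t
    simp only [hp, sF, mul_neg, Finset.sum_neg_distrib, Finset.mul_sum, Finset.sum_mul]
    rw [Finset.sum_comm]
    exact congrArg _ (Finset.sum_congr rfl fun _ _ => Finset.sum_congr rfl fun _ _ => by ring)
  have hlap : lapF D Γ Aν p s = -∑ i, ∑ r, (cov2 D Γ (sF Aν h) i r i s * q r s +
      sF Aν h i r s * (kron i r + h r i s * p s)) := by
    simp only [lapF, hgrad, cov1_neg hD, cov1_sum_mul hD hΓ, hq, Finset.sum_neg_distrib]
  have hdiv : ∑ i, ∑ r, cov2 D Γ (sF Aν h) i r i s * q r s = ∑ r, D r (HF Aν h) s * q r s := by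
    rw [Finset.sum_comm]
    simp only [← Finset.sum_mul, sum_cov2_sF_eq_deriv_HF hD hΓ hCodazzi hAAA hAν]
  have htrace : ∑ i, ∑ r, sF Aν h i r s * kron i r = HF Aν h s := by
    simp [kron, HF]
  have hcurv : ∑ i, ∑ r, sF Aν h i r s * (h r i s * p s) = trAFS2 Aν h s * p s := by
    simp only [trAFS2, Finset.sum_mul, mul_assoc]
  rw [hlap]
  simp only [mul_add, Finset.sum_add_distrib, hdiv, htrace, hcurv]
  ring

end AnisotropicCurvature

section Hypersurface

variable {n : ℕ} {S : Type} {D : Fin n → (S → ℝ) → S → ℝ}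
  {Γ : Fin n → Fin n → Fin n → S → ℝ} {h : Fin n → Fin n → S → ℝ}
  {E : Type*} [NormedAddCommGroup E] [InnerProductSpace ℝ E] [FiniteDimensional ℝ E]
  {x ν : S → E} {e : Fin n → S → E}

theorem deriv_inner_position_normal (hD : ∀ i, IsDerivationOp (D i))
    (hx : ∀ i w s, D i (fun t => ⟪x t, w⟫) s = ⟪e i s, w⟫)
    (hν : ∀ i w s, D i (fun t => ⟪ν t, w⟫) s = -∑ j, h i j s * ⟪e j s, w⟫)
    (hνtan : ∀ i s, ⟪e i s, ν s⟫ = 0) (j : Fin n) (s : S) :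
    D j (fun t => ⟪x t, ν t⟫) s = -∑ k, h j k s * ⟪x s, e k s⟫ := by
  rw [(hD j).map_inner (v' := -∑ k, h j k s • e k s) (hx j · s)
    (fun w => by simp [hν, inner_neg_left, sum_inner, real_inner_smul_left])]
  simp [hνtan, inner_neg_right, inner_sum, real_inner_smul_right]

theorem cov1_inner_position_frame (hD : ∀ i, IsDerivationOp (D i))
    (hΓ : ∀ i j k s, Γ i j k s = -Γ j i k s)
    (hx : ∀ i w s, D i (fun t => ⟪x t, w⟫) s = ⟪e i s, w⟫)
    (he : ∀ i j w s, D j (fun t => ⟪e i t, w⟫) s =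
      (∑ k, Γ i k j s * ⟪e k s, w⟫) + h i j s * ⟪ν s, w⟫)
    (horth : ∀ i j s, ⟪e i s, e j s⟫ = kron i j) (m i : Fin n) (s : S) :
    cov1 D Γ (fun k t => ⟪x t, e k t⟫) m i s = kron i m + h m i s * ⟪x s, ν s⟫ := by
  have hDq : D i (fun t => ⟪x t, e m t⟫) s =
      kron i m + ∑ k, Γ m k i s * ⟪x s, e k s⟫ + h m i s * ⟪x s, ν s⟫ := by
    rw [(hD i).map_inner (v' := ∑ k, Γ m k i s • e k s + h m i s • ν s) (hx i · s)
      (fun w => by simp [he, inner_add_left, sum_inner, real_inner_smul_left])]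
    simp [horth, inner_add_right, inner_sum, real_inner_smul_right, add_assoc]
  have hcancel : ∑ k, Γ m k i s * ⟪x s, e k s⟫ + ∑ k, ⟪x s, e k s⟫ * Γ k m i s = 0 := by
    rw [← Finset.sum_add_distrib]
    exact Finset.sum_eq_zero fun k _ => by rw [hΓ k]; ring
  rw [cov1, hDq]
  linarith

end Hypersurface

theorem stmt_10_general (n : ℕ) (S : Type)
    (D : Fin n → (S → ℝ) → S → ℝ)
    (Γ : Fin n → Fin n → Fin n → S → ℝ)
    -- metric compatibility: `ω_{ij} = -ω_{ji}`
    (hΓ : ∀ i j k s, Γ i j k s = -Γ j i k s)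
    -- `D i` is a derivation (linearity and Leibniz rule)
    (hDadd : ∀ i (f g : S → ℝ) s, D i (fun t => f t + g t) s = D i f s + D i g s)
    (hDmul : ∀ i (f g : S → ℝ) s,
      D i (fun t => f t * g t) s = D i f s * g s + f s * D i g s)
    (h : Fin n → Fin n → S → ℝ)
    -- Codazzi equation `h_{ijk} = h_{ikj}`
    (hCodazzi : ∀ i j k s, cov2 D Γ h i j k s = cov2 D Γ h i k j s)
    (Aν : Fin n → Fin n → S → ℝ)
    (AAA : Fin n → Fin n → Fin n → S → ℝ)
    -- `A_{ij,k}` is totally symmetric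
    (hAAAsymm : ∀ i j k s, AAA i j k s = AAA j i k s ∧ AAA i j k s = AAA i k j s)
    -- `(A_{ij}∘ν)_k = -Σ_p (A_{ij,p}∘ν) h_{pk}`
    (hAν : ∀ i j k s, cov2 D Γ Aν i j k s = -∑ p, AAA i j p s * h p k s)
    (x ν : S → EuclideanSpace ℝ (Fin (n + 1)))
    (e : Fin n → S → EuclideanSpace ℝ (Fin (n + 1)))
    (horth : ∀ i j s, (inner ℝ (e i s) (e j s) : ℝ) = kron i j)
    (hνtan : ∀ i s, (inner ℝ (e i s) (ν s) : ℝ) = 0)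
    -- `dx(e_i) = e_i`
    (hx : ∀ i (w : EuclideanSpace ℝ (Fin (n + 1))) s,
      D i (fun t => (inner ℝ (x t) w : ℝ)) s = inner ℝ (e i s) w)
    -- Weingarten equation `dν(e_i) = -Σ_j h_{ij} e_j`
    (hν : ∀ i (w : EuclideanSpace ℝ (Fin (n + 1))) s,
      D i (fun t => (inner ℝ (ν t) w : ℝ)) s = -∑ j, h i j s * (inner ℝ (e j s) w : ℝ))
    -- Gauss formula `de_i(e_j) = Σ_k ω_{ik}(e_j) e_k + h_{ij} ν`
    (he : ∀ i j (w : EuclideanSpace ℝ (Fin (n + 1))) s,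
      D j (fun t => (inner ℝ (e i t) w : ℝ)) s =
        (∑ k, Γ i k j s * (inner ℝ (e k s) w : ℝ)) + h i j s * (inner ℝ (ν s) w : ℝ))
    :
    (∀ s, lapF D Γ Aν (fun t => (inner ℝ (x t) (ν t) : ℝ)) s +
        trAFS2 Aν h s * (inner ℝ (x s) (ν s) : ℝ) + HF Aν h s +
        (∑ j, D j (fun t => HF Aν h t) s * (inner ℝ (x s) (e j s) : ℝ)) = 0) ∧
      ((∀ i s, D i (fun t => HF Aν h t) s = 0) →
        ∀ s, lapF D Γ Aν (fun t => (inner ℝ (x t) (ν t) : ℝ)) s +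
          trAFS2 Aν h s * (inner ℝ (x s) (ν s) : ℝ) + HF Aν h s = 0) := by
  have hD : ∀ i, IsDerivationOp (D i) := fun i => ⟨hDadd i, hDmul i⟩
  have key := lapF_add_trAFS2_mul_add_HF_add_sum_eq_zero hD hΓ hCodazzi
    (fun i j k s => (hAAAsymm i j k s).2) hAν (deriv_inner_position_normal hD hx hν hνtan)
    (cov1_inner_position_frame hD hΓ hx he horth)
  exact ⟨key, fun hH s => by simpa [hH] using key s⟩

/-- The support function `p = ⟨x,ν⟩` satisfies
`Δ_F p + tr(A_F S²) p + H_F + ⟨x, ∇H_F⟩ = 0`; in particular, when `H_F` is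
constant, `Δ_F p + tr(A_F S²) p + H_F = 0`. -/
theorem stmt_10 (n : ℕ) (S : Type)
    (D : Fin n → (S → ℝ) → S → ℝ)
    (Γ : Fin n → Fin n → Fin n → S → ℝ)
    -- metric compatibility: `ω_{ij} = -ω_{ji}`
    (hΓ : ∀ i j k s, Γ i j k s = -Γ j i k s)
    -- `D i` is a derivation (linearity and Leibniz rule)
    (hDadd : ∀ i (f g : S → ℝ) s, D i (fun t => f t + g t) s = D i f s + D i g s)
    (hDmul : ∀ i (f g : S → ℝ) s,
      D i (fun t => f t * g t) s = D i f s * g s + f s * D i g s)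
    (h : Fin n → Fin n → S → ℝ)
    (hsymm : ∀ i j s, h i j s = h j i s)
    -- Codazzi equation `h_{ijk} = h_{ikj}`
    (hCodazzi : ∀ i j k s, cov2 D Γ h i j k s = cov2 D Γ h i k j s)
    (Fν : S → ℝ) (Fiν : Fin n → S → ℝ)
    (Aν : Fin n → Fin n → S → ℝ) (hAsymm : ∀ i j s, Aν i j s = Aν j i s)
    (AAA : Fin n → Fin n → Fin n → S → ℝ)
    -- `A_{ij,k}` is totally symmetric
    (hAAAsymm : ∀ i j k s, AAA i j k s = AAA j i k s ∧ AAA i j k s = AAA i k j s)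
    -- `(F∘ν)_i = -Σ_j h_{ij} (F_j∘ν)`
    (hFν : ∀ i s, D i Fν s = -∑ j, h i j s * Fiν j s)
    -- `(F_i∘ν)_j = -Σ_k h_{jk} (F_{ik}∘ν)`, with `F_{ik} = A_{ik} - F δ_{ik}`
    (hFiν : ∀ i j s, cov1 D Γ Fiν i j s =
      -∑ k, h j k s * (Aν i k s - Fν s * kron i k))
    -- `(A_{ij}∘ν)_k = -Σ_p (A_{ij,p}∘ν) h_{pk}`
    (hAν : ∀ i j k s, cov2 D Γ Aν i j k s = -∑ p, AAA i j p s * h p k s)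
    (x ν : S → EuclideanSpace ℝ (Fin (n + 1)))
    (e : Fin n → S → EuclideanSpace ℝ (Fin (n + 1)))
    (horth : ∀ i j s, (inner ℝ (e i s) (e j s) : ℝ) = kron i j)
    (hνunit : ∀ s, (inner ℝ (ν s) (ν s) : ℝ) = 1)
    (hνtan : ∀ i s, (inner ℝ (e i s) (ν s) : ℝ) = 0)
    -- `dx(e_i) = e_i`
    (hx : ∀ i (w : EuclideanSpace ℝ (Fin (n + 1))) s,
      D i (fun t => (inner ℝ (x t) w : ℝ)) s = inner ℝ (e i s) w)
    -- Weingarten equation `dν(e_i) = -Σ_j h_{ij} e_j`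
    (hν : ∀ i (w : EuclideanSpace ℝ (Fin (n + 1))) s,
      D i (fun t => (inner ℝ (ν t) w : ℝ)) s = -∑ j, h i j s * (inner ℝ (e j s) w : ℝ))
    -- Gauss formula `de_i(e_j) = Σ_k ω_{ik}(e_j) e_k + h_{ij} ν`
    (he : ∀ i j (w : EuclideanSpace ℝ (Fin (n + 1))) s,
      D j (fun t => (inner ℝ (e i t) w : ℝ)) s =
        (∑ k, Γ i k j s * (inner ℝ (e k s) w : ℝ)) + h i j s * (inner ℝ (ν s) w : ℝ))
    :
    (∀ s, lapF D Γ Aν (fun t => (inner ℝ (x t) (ν t) : ℝ)) s +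
        trAFS2 Aν h s * (inner ℝ (x s) (ν s) : ℝ) + HF Aν h s +
        (∑ j, D j (fun t => HF Aν h t) s * (inner ℝ (x s) (e j s) : ℝ)) = 0) ∧
      ((∀ i s, D i (fun t => HF Aν h t) s = 0) →
        ∀ s, lapF D Γ Aν (fun t => (inner ℝ (x t) (ν t) : ℝ)) s +
          trAFS2 Aν h s * (inner ℝ (x s) (ν s) : ℝ) + HF Aν h s = 0) :=
  stmt_10_general n S D Γ hΓ hDadd hDmul h hCodazzi Aν AAA hAAAsymm hAν x ν e horth hνtan hx hν he
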